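/- arXiv:1712.04045 — 3 statements merged into one kernel-verified Lean document; each statement's English description precedes it below -/
import Mathlib

section
/- Let E : ℝⁿ → ℝ be differentiable with L-Lipschitz gradient, R : ℝⁿ → ℝ ∪ {∞} proper, lsc, convex, and let the sequences (uᵏ, qᵏ) satisfy qᵏ⁺¹ = qᵏ − (1/τᵏ)(uᵏ⁺¹ − uᵏ + τᵏ∇E(uᵏ)) with qᵏ⁺¹ ∈ ∂R(uᵏ⁺¹) and stepsize 0 < τᵏ ≤ 2/(L + 2ρ₁) for some ρ₁ > 0. Then E(uᵏ⁺¹) + D_R^symm(uᵏ⁺¹, uᵏ) + ρ₁‖uᵏ⁺¹ − uᵏ‖² ≤ E(uᵏ) for all k. -/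
/-!
The update rule is the optimality condition of the linearised Bregman step, so the symmetric
Bregman distance of two consecutive iterates is known exactly:
`⟪q' - q, u' - u⟫ = -‖u' - u‖² / τ - ⟪∇E u, u' - u⟫`. Adding the descent lemma
`E u' ≤ E u + ⟪∇E u, u' - u⟫ + L/2 ‖u' - u‖²` cancels the gradient term, and the
step-size bound `1/τ ≥ L/2 + ρ₁` absorbs the remaining quadratic terms.
-/

open RealInnerProductSpace Filter Topology

noncomputable def fenchel {n : ℕ} (J : EuclideanSpace ℝ (Fin n) → EReal)
    (p : EuclideanSpace ℝ (Fin n)) : EReal :=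
  ⨆ u, ((⟪u, p⟫ : ℝ) : EReal) - J u

def IsSubgradient {n : ℕ} (J : EuclideanSpace ℝ (Fin n) → EReal)
    (u p : EuclideanSpace ℝ (Fin n)) : Prop :=
  ∀ v, J u + ((⟪p, v - u⟫ : ℝ) : EReal) ≤ J v

def ERealConvex {n : ℕ} (J : EuclideanSpace ℝ (Fin n) → EReal) : Prop :=
  ∀ u v : EuclideanSpace ℝ (Fin n), ∀ a b : ℝ, 0 ≤ a → 0 ≤ b → a + b = 1 →
    J (a • u + b • v) ≤ (a : EReal) * J u + (b : EReal) * J v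

section LinearizedBregman

variable {F : Type*} [NormedAddCommGroup F] [InnerProductSpace ℝ F]

theorem inner_sub_eq_of_eq_sub_smul {u u' q q' g : F} {τ : ℝ} (hτ : τ ≠ 0)
    (hupd : q' = q - (1 / τ) • (u' - u + τ • g)) :
    ⟪q' - q, u' - u⟫ = -(1 / τ) * ‖u' - u‖ ^ 2 - ⟪g, u' - u⟫ := by
  rw [hupd, sub_sub_cancel_left, inner_neg_left, real_inner_smul_left, inner_add_left,
    real_inner_smul_left, real_inner_self_eq_norm_sq]
  field_simp
  ring

variable [CompleteSpace F]

theorem hasDerivAt_comp_add_smul {E : F → ℝ} (hE : Differentiable ℝ E) (x d : F) (t : ℝ) :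
    HasDerivAt (fun t : ℝ => E (x + t • d)) ⟪gradient E (x + t • d), d⟫ t := by
  have hline : HasDerivAt (fun t : ℝ => x + t • d) d t := by
    simpa using ((hasDerivAt_id t).smul_const d).const_add x
  have h := (hE (x + t • d)).hasFDerivAt.comp_hasDerivAt t hline
  rw [← inner_gradient_left] at h
  exact h

theorem descent_lemma {E : F → ℝ} {L : ℝ} (hE : Differentiable ℝ E)
    (hLip : ∀ x y, ‖gradient E x - gradient E y‖ ≤ L * ‖x - y‖) (x y : F) :
    E y ≤ E x + ⟪gradient E x, y - x⟫ + L / 2 * ‖y - x‖ ^ 2 := by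
  set d := y - x
  -- The claim is `g 1 ≤ g 0`; `g` is antitone on `[0, ∞)` by Cauchy–Schwarz and the
  -- Lipschitz bound on the gradient.
  set g : ℝ → ℝ := fun t => E (x + t • d) - t * ⟪gradient E x, d⟫ - L / 2 * t ^ 2 * ‖d‖ ^ 2
  have hg : ∀ t,
      HasDerivAt g (⟪gradient E (x + t • d) - gradient E x, d⟫ - L * t * ‖d‖ ^ 2) t := by
    intro t
    refine (((hasDerivAt_comp_add_smul hE x d t).sub ((hasDerivAt_id t).mul_const
      ⟪gradient E x, d⟫)).sub (((hasDerivAt_pow 2 t).const_mul (L / 2)).mul_const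
      (‖d‖ ^ 2))).congr_deriv ?_
    rw [inner_sub_left]; push_cast; ring
  have hg'_nonpos : ∀ t, 0 ≤ t →
      ⟪gradient E (x + t • d) - gradient E x, d⟫ - L * t * ‖d‖ ^ 2 ≤ 0 := by
    intro t ht
    have hdist : ‖x + t • d - x‖ = t * ‖d‖ := by simp [norm_smul, abs_of_nonneg ht]
    rw [sub_nonpos]
    calc ⟪gradient E (x + t • d) - gradient E x, d⟫
        ≤ ‖gradient E (x + t • d) - gradient E x‖ * ‖d‖ := real_inner_le_norm _ _
      _ ≤ L * ‖x + t • d - x‖ * ‖d‖ := by gcongr; exact hLip _ _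
      _ = L * t * ‖d‖ ^ 2 := by rw [hdist]; ring
  have hanti : AntitoneOn g (Set.Ici 0) :=
    antitoneOn_of_hasDerivWithinAt_nonpos (convex_Ici 0)
      (fun t _ => (hg t).continuousAt.continuousWithinAt)
      (fun t _ => (hg t).hasDerivWithinAt)
      (fun t ht => hg'_nonpos t (interior_subset ht))
  have h01 : g 1 ≤ g 0 :=
    hanti Set.self_mem_Ici (Set.mem_Ici.2 zero_le_one) zero_le_one
  simp only [g, d, one_smul, add_sub_cancel, zero_smul, add_zero] at h01
  linarith

theorem sufficient_decrease_of_eq_sub_smul {E : F → ℝ} {L ρ τ : ℝ} (hE : Differentiable ℝ E)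
    (hLip : ∀ x y, ‖gradient E x - gradient E y‖ ≤ L * ‖x - y‖) (hτ : 0 < τ)
    (hτle : τ ≤ 2 / (L + 2 * ρ)) {u u' q q' : F}
    (hupd : q' = q - (1 / τ) • (u' - u + τ • gradient E u)) :
    E u' + ⟪q' - q, u' - u⟫ + ρ * ‖u' - u‖ ^ 2 ≤ E u := by
  have hτinv : (L + 2 * ρ) / 2 ≤ 1 / τ := by
    simpa only [one_div_div] using one_div_le_one_div_of_le hτ hτle
  have hdescent := descent_lemma hE hLip u u'
  have hquadratic := mul_le_mul_of_nonneg_right hτinv (sq_nonneg ‖u' - u‖)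
  rw [inner_sub_eq_of_eq_sub_smul hτ.ne' hupd]
  linarith

end LinearizedBregman

theorem sufficient_decrease_general {n : ℕ} (L ρ₁ : ℝ)
    (E : EuclideanSpace ℝ (Fin n) → ℝ) (hE : Differentiable ℝ E)
    (hLip : ∀ x y, ‖gradient E x - gradient E y‖ ≤ L * ‖x - y‖)
    (u q : ℕ → EuclideanSpace ℝ (Fin n)) (τ : ℕ → ℝ)
    (hstep : ∀ k, 0 < τ k ∧ τ k ≤ 2 / (L + 2 * ρ₁))
    (hupd : ∀ k, q (k + 1) = q k - (1 / τ k) • (u (k + 1) - u k + τ k • gradient E (u k))) :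
    ∀ k, E (u (k + 1)) + ⟪q (k + 1) - q k, u (k + 1) - u k⟫
        + ρ₁ * ‖u (k + 1) - u k‖ ^ 2 ≤ E (u k) :=
  fun k => sufficient_decrease_of_eq_sub_smul hE hLip (hstep k).1 (hstep k).2 (hupd k)

/-- Sufficient decrease property of the linearised Bregman iteration. -/
theorem sufficient_decrease {n : ℕ} (L ρ₁ : ℝ) (hρ₁ : 0 < ρ₁)
    (E : EuclideanSpace ℝ (Fin n) → ℝ) (hE : Differentiable ℝ E)
    (hLip : ∀ x y, ‖gradient E x - gradient E y‖ ≤ L * ‖x - y‖)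
    (R : EuclideanSpace ℝ (Fin n) → EReal)
    (hproper₁ : ∀ x, R x ≠ ⊥) (hproper₂ : ∃ x, R x ≠ ⊤)
    (hlsc : LowerSemicontinuous R) (hconv : ERealConvex R)
    (u q : ℕ → EuclideanSpace ℝ (Fin n)) (τ : ℕ → ℝ)
    (hstep : ∀ k, 0 < τ k ∧ τ k ≤ 2 / (L + 2 * ρ₁))
    (hsub : ∀ k, IsSubgradient R (u k) (q k))
    (hupd : ∀ k, q (k + 1) = q k - (1 / τ k) • (u (k + 1) - u k + τ k • gradient E (u k))) :
    ∀ k, E (u (k + 1)) + ⟪q (k + 1) - q k, u (k + 1) - u k⟫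
        + ρ₁ * ‖u (k + 1) - u k‖ ^ 2 ≤ E (u k) :=
  sufficient_decrease_general L ρ₁ E hE hLip u q τ hstep hupd
end

section
/- Let (aₖ) be a nonnegative real sequence, φ : [0,η) → ℝ concave, increasing, φ(0)=0, and suppose 2aₖ₊₁ ≤ C(φᵏ − φᵏ⁺¹) + aₖ for all k ≥ l, where φᵏ := φ(xₖ) with (xₖ) nonincreasing in [0,η) and C > 0. Then Σ_{k=l}^∞ aₖ₊₁ < ∞. -/
open RealInnerProductSpace Filter Topology

/-- KL finite-length telescoping argument. -/
theorem finite_length_telescoping (η C : ℝ) (hC : 0 < C) (l : ℕ)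
    (a : ℕ → ℝ) (ha : ∀ k, 0 ≤ a k)
    (φ : ℝ → ℝ) (hφconc : ConcaveOn ℝ (Set.Ico 0 η) φ)
    (hφmono : MonotoneOn φ (Set.Ico 0 η)) (hφ0 : φ 0 = 0)
    (x : ℕ → ℝ) (hx : Antitone x) (hxmem : ∀ k, x k ∈ Set.Ico (0 : ℝ) η)
    (hrec : ∀ k, l ≤ k → 2 * a (k + 1) ≤ C * (φ (x k) - φ (x (k + 1))) + a k) :
    Summable (fun k : ℕ => a (l + k + 1)) := by
  have h0mem : (0 : ℝ) ∈ Set.Ico (0 : ℝ) η := by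
    have := hxmem 0
    exact ⟨le_refl 0, lt_of_le_of_lt this.1 this.2⟩
  have hφnn : ∀ k, 0 ≤ φ (x k) := fun k => by
    have := hφmono h0mem (hxmem k) (hxmem k).1
    simpa [hφ0] using this
  have key : ∀ n, (∑ k ∈ Finset.range n, a (l + k + 1)) + a (l + n)
      ≤ C * (φ (x l) - φ (x (l + n))) + a l := by
    intro n
    induction n with
    | zero => simp
    | succ n ih =>
      have hr := hrec (l + n) (Nat.le_add_right l n)
      have e : l + (n + 1) = l + n + 1 := by omega
      rw [Finset.sum_range_succ, e]
      linarith
  apply summable_of_sum_range_le (c := C * φ (x l) + a l) (fun k => ha _)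
  intro n
  have := key n
  have h1 := hφnn (l + n)
  have h2 := ha (l + n)
  nlinarith
end

section
/- Let E : ℝⁿ → ℝ be continuously differentiable with locally Lipschitz gradient, and suppose uᵏ → ū with ∇E(ū) ≠ 0, stepsizes τᵏ ≥ τ_min > 0, and qᵏ defined by qᵏ = q⁰ − Σ_{n=0}^{k−1}[(1/τⁿ)(uⁿ⁺¹ − uⁿ)] − Σ_{n=0}^{k−1} ∇E(uⁿ). Then ‖qᵏ‖ → ∞ as k → ∞. -/
open RealInnerProductSpace Filter Topology

/-- If the primal iterates converge to a non-critical point of E,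
the dual iterates diverge. -/
theorem dual_diverges_at_noncritical {n : ℕ}
    (E : EuclideanSpace ℝ (Fin n) → ℝ) (hE : ContDiff ℝ 1 E)
    (hLip : LocallyLipschitz (gradient E))
    (u q : ℕ → EuclideanSpace ℝ (Fin n)) (τ : ℕ → ℝ) (τmin : ℝ)
    (hτmin : 0 < τmin) (hτ : ∀ k, τmin ≤ τ k)
    (ubar : EuclideanSpace ℝ (Fin n)) (hconv : Tendsto u atTop (𝓝 ubar))
    (hnoncrit : gradient E ubar ≠ 0)
    (hq : ∀ k, q k = q 0 - (∑ m ∈ Finset.range k, (1 / τ m) • (u (m + 1) - u m))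
        - ∑ m ∈ Finset.range k, gradient E (u m)) :
    Tendsto (fun k => ‖q k‖) atTop atTop := by
  set g := gradient E ubar with hg
  set a : ℕ → EuclideanSpace ℝ (Fin n) :=
    fun m => (1 / τ m) • (u (m + 1) - u m) + gradient E (u m) with ha
  -- a m → g
  have hdiff0 : Tendsto (fun m => u (m + 1) - u m) atTop (𝓝 0) := by
    have h1 : Tendsto (fun m => u (m + 1)) atTop (𝓝 ubar) :=
      hconv.comp (tendsto_add_atTop_nat 1)
    simpa using h1.sub hconv
  have hsmul0 : Tendsto (fun m => (1 / τ m) • (u (m + 1) - u m)) atTop (𝓝 0) := by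
    apply squeeze_zero_norm (a := fun m => (1 / τmin) * ‖u (m + 1) - u m‖)
    · intro m
      rw [norm_smul]
      apply mul_le_mul_of_nonneg_right _ (norm_nonneg _)
      rw [Real.norm_eq_abs, abs_of_pos (div_pos one_pos (lt_of_lt_of_le hτmin (hτ m)))]
      exact one_div_le_one_div_of_le hτmin (hτ m)
    · simpa using (tendsto_const_nhds (x := 1 / τmin)).mul
        (tendsto_norm_zero.comp hdiff0)
  have hgrad : Tendsto (fun m => gradient E (u m)) atTop (𝓝 g) :=
    (hLip.continuous.continuousAt).tendsto.comp hconv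
  have haconv : Tendsto a atTop (𝓝 g) := by simpa [ha, one_div] using hsmul0.add hgrad
  -- Cesàro
  have hces : Tendsto (fun k : ℕ => (k⁻¹ : ℝ) • ∑ m ∈ Finset.range k, a m)
      atTop (𝓝 g) := haconv.cesaro_smul
  have hnorm : Tendsto (fun k : ℕ => ‖(k⁻¹ : ℝ) • ∑ m ∈ Finset.range k, a m‖)
      atTop (𝓝 ‖g‖) := hces.norm
  have hc : 0 < ‖g‖ := norm_pos_iff.mpr hnoncrit
  have hev : ∀ᶠ k : ℕ in atTop, ‖g‖ / 2 ≤ ‖(k⁻¹ : ℝ) • ∑ m ∈ Finset.range k, a m‖ :=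
    hnorm.eventually (eventually_ge_nhds (by linarith))
  -- lower bound on ‖q k‖
  have hqk : ∀ k, q k = q 0 - ∑ m ∈ Finset.range k, a m := by
    intro k
    rw [hq k, ha, Finset.sum_add_distrib]
    abel
  have hlow : ∀ᶠ k : ℕ in atTop, (k : ℝ) * (‖g‖ / 2) - ‖q 0‖ ≤ ‖q k‖ := by
    filter_upwards [hev, eventually_ge_atTop 1] with k hk hk1
    have hkpos : (0 : ℝ) < k := by exact_mod_cast hk1
    have hs : (k : ℝ) * (‖g‖ / 2) ≤ ‖∑ m ∈ Finset.range k, a m‖ := by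
      have := mul_le_mul_of_nonneg_left hk (le_of_lt hkpos)
      rw [norm_smul, Real.norm_eq_abs, abs_inv, abs_of_pos hkpos,
        ← mul_assoc, mul_inv_cancel₀ hkpos.ne', one_mul] at this
      exact this
    have : ‖∑ m ∈ Finset.range k, a m‖ - ‖q 0‖ ≤ ‖q k‖ := by
      rw [hqk k]
      calc ‖∑ m ∈ Finset.range k, a m‖ - ‖q 0‖
          ≤ ‖q 0 - ∑ m ∈ Finset.range k, a m‖ := by
            have h1 := norm_sub_norm_le (∑ m ∈ Finset.range k, a m) (q 0)
            rw [norm_sub_rev] at h1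
            linarith
        _ = _ := rfl
    linarith
  apply tendsto_atTop_mono' _ hlow
  apply Tendsto.atTop_add _ tendsto_const_nhds
  exact (tendsto_natCast_atTop_atTop).atTop_mul_const (by linarith)
end
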